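/- arXiv:1708.03654 — 6 statements merged into one kernel-verified Lean document; each statement's English description precedes it below -/
import Mathlib

section
/- For q ≥ 2, in any linear sequence of length mq^k + k - 1 over an alphabet of size q in which every k-mer occurs exactly m times as a (contiguous) substring, the first (k-1) characters equal the last (k-1) characters. -/
/-!
Read the (k-1)-windows of `s` as the vertices of a walk of length `m q^k` whose edges are the
k-windows: the edge starting at position `i` goes from the prefix to the suffix of that k-mer.
Every (k-1)-mer is the prefix of exactly `q` k-mers and the suffix of exactly `q` k-mers, so every
vertex is left exactly `q m` times and entered exactly `q m` times. Counting the visits to the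
starting vertex once by departures and once by arrivals, the walk must end where it started.
-/

/-- The k-mer (window of length k) of a linear sequence of length m*q^k + k - 1
starting at position i, for i among the m*q^k starting positions. -/
def linWin (m q k : ℕ) (s : Fin (m * q ^ k + k - 1) → Fin q)
    (i : Fin (m * q ^ k)) : Fin k → Fin q :=
  fun j => s ⟨(i : ℕ) + (j : ℕ), by
    have hi := i.isLt; have hj := j.isLt; omega⟩

open Finset

theorem Fin.last_eq_zero_of_card_castSucc_eq_card_succ {β : Type*} [DecidableEq β] {N : ℕ}
    (t : Fin (N + 1) → β)
    (h : #{i : Fin N | t i.castSucc = t 0} = #{i : Fin N | t i.succ = t 0}) :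
    t (Fin.last N) = t 0 := by
  have hvisits : #{i : Fin N | t i.castSucc = t 0} + (if t (Fin.last N) = t 0 then 1 else 0)
      = 1 + #{i : Fin N | t i.succ = t 0} := by
    simp only [card_filter, ← Fin.sum_univ_castSucc (f := fun i => if t i = t 0 then 1 else 0),
      Fin.sum_univ_succ (f := fun i => if t i = t 0 then 1 else 0), if_true]
  by_contra hne
  rw [if_neg hne] at hvisits
  omega

theorem card_filter_comp_eq_card_fiber_mul {ι β γ : Type*} [Fintype ι] [Fintype β]
    [DecidableEq β] [DecidableEq γ] (g : ι → β) (F : β → γ) {m : ℕ}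
    (hg : ∀ y, #{i | g i = y} = m) (w : γ) :
    #{i | F (g i) = w} = #{y | F y = w} * m := by
  rw [card_eq_sum_card_fiberwise (f := g) (t := {y | F y = w}) (fun i hi => by simpa using hi)]
  refine (sum_const_nat fun y hy => ?_).trans rfl
  rw [filter_filter, ← hg y]
  congr 1
  ext i
  simp only [mem_filter, mem_univ, true_and] at hy ⊢
  constructor
  · exact And.right
  · rintro rfl
    exact ⟨hy, rfl⟩

theorem Fin.card_filter_tail_eq {α : Type*} [Fintype α] [DecidableEq α] {n : ℕ}
    (w : Fin n → α) : #{y : Fin (n + 1) → α | Fin.tail y = w} = Fintype.card α := by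
  have hfiber : ({y | Fin.tail y = w} : Finset (Fin (n + 1) → α)) =
      univ.map ⟨fun a => Fin.cons a w, Fin.cons_left_injective (α := fun _ => α) w⟩ := by
    ext y
    simp only [mem_filter, mem_univ, true_and, mem_map, Function.Embedding.coeFn_mk]
    constructor
    · rintro rfl
      exact ⟨y 0, Fin.cons_self_tail y⟩
    · rintro ⟨a, rfl⟩
      exact Fin.tail_cons (α := fun _ => α) a w
  rw [hfiber, card_map, card_univ]

theorem Fin.card_filter_init_eq {α : Type*} [Fintype α] [DecidableEq α] {n : ℕ}
    (w : Fin n → α) : #{y : Fin (n + 1) → α | Fin.init y = w} = Fintype.card α := by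
  have hfiber : ({y | Fin.init y = w} : Finset (Fin (n + 1) → α)) =
      univ.map ⟨fun a => Fin.snoc w a, Fin.snoc_right_injective (α := fun _ => α) w⟩ := by
    ext y
    simp only [mem_filter, mem_univ, true_and, mem_map, Function.Embedding.coeFn_mk]
    constructor
    · rintro rfl
      exact ⟨y (Fin.last n), Fin.snoc_init_self y⟩
    · rintro ⟨a, rfl⟩
      exact Fin.init_snoc (α := fun _ => α) a w
  rw [hfiber, card_map, card_univ]

theorem deBruijn_walk_closed_of_edges_equidistributed {α : Type*} [Fintype α] [DecidableEq α]
    {n N m : ℕ} (e : Fin N → Fin (n + 1) → α) (he : ∀ y, #{i | e i = y} = m)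
    (t : Fin (N + 1) → Fin n → α) (hinit : ∀ i, Fin.init (e i) = t i.castSucc)
    (htail : ∀ i, Fin.tail (e i) = t i.succ) :
    t (Fin.last N) = t 0 := by
  apply Fin.last_eq_zero_of_card_castSucc_eq_card_succ
  simp only [← hinit, ← htail, card_filter_comp_eq_card_fiber_mul e _ he,
    Fin.card_filter_init_eq, Fin.card_filter_tail_eq]

/-- For q ≥ 2, in any linear sequence of length m*q^k + k - 1 over an
alphabet of size q in which every k-mer occurs exactly m times as a contiguous
substring, the first k-1 characters equal the last k-1 characters. -/
theorem linear_mdb_first_eq_last (m q k : ℕ) (hm : 1 ≤ m) (hq : 2 ≤ q)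
    (s : Fin (m * q ^ k + k - 1) → Fin q)
    (hs : ∀ y : Fin k → Fin q,
      (Finset.univ.filter (fun i : Fin (m * q ^ k) => linWin m q k s i = y)).card = m) :
    ∀ j : Fin (k - 1),
      s ⟨(j : ℕ), by
          have hj := j.isLt
          have h1 : 0 < m * q ^ k := Nat.mul_pos hm (pow_pos (by omega) k)
          omega⟩
      = s ⟨m * q ^ k + (j : ℕ), by have hj := j.isLt; omega⟩ := by
  intro j
  obtain ⟨n, rfl⟩ : ∃ n, k = n + 1 := ⟨k - 1, by have := j.isLt; omega⟩
  let vertex : Fin (m * q ^ (n + 1) + 1) → Fin n → Fin q :=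
    fun i l => s ⟨i + l, by have := i.isLt; have := l.isLt; omega⟩
  have hclosed : vertex (Fin.last _) = vertex 0 :=
    deBruijn_walk_closed_of_edges_equidistributed (linWin m q (n + 1) s) hs vertex
      (fun _ => rfl)
      (fun i => funext fun l => congrArg s (Fin.ext (by simp only [Fin.val_succ]; omega)))
  simpa [vertex] using (congrFun hclosed ⟨j, j.isLt⟩).symm
end

section
/- For q ≥ 2, the map that deletes the last k-1 characters is a bijection from the set of linear multi de Bruijn sequences (words of length mq^k+k-1 containing every k-mer exactly m times as a substring) to the set of linearizations of cyclic multi de Bruijn sequences (words of length mq^k containing every k-mer exactly m times cyclically). -/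
/-- Cyclic window of length k of a word of length n, starting at position i. -/
def cycWin (n k q : ℕ) (s : Fin n → Fin q) (i : Fin n) : Fin k → Fin q :=
  fun j => s ⟨((i : ℕ) + (j : ℕ)) % n, Nat.mod_lt _ i.pos⟩

/-- A linearized cyclic multi de Bruijn sequence: every k-mer occurs exactly m
times among the cyclic windows of length k. -/
def isCycMDB (m q k : ℕ) (s : Fin (m * q ^ k) → Fin q) : Prop :=
  ∀ y : Fin k → Fin q,
    (Finset.univ.filter (fun i : Fin (m * q ^ k) => cycWin (m * q ^ k) k q s i = y)).card = m

/-- A linear multi de Bruijn sequence: every k-mer occurs exactly m times among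
the contiguous substrings of length k. -/
def isLinMDB (m q k : ℕ) (s : Fin (m * q ^ k + k - 1) → Fin q) : Prop :=
  ∀ y : Fin k → Fin q,
    (Finset.univ.filter (fun i : Fin (m * q ^ k) => linWin m q k s i = y)).card = m

/-! A linear multi de Bruijn sequence `s` of length `N + k - 1`, `N = m q^k`, is `N`-periodic:
its `(k-1)`-windows at positions `0, …, N - 1` are the prefixes, and those at `1, …, N` the
suffixes, of its `k`-windows, so both families contain every `(k-1)`-mer exactly `q m` times,
which forces the windows at `0` and at `N` to agree. By periodicity the linear `k`-windows of `s`
are the cyclic windows of its first `N` letters, and conversely the periodic extension of a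
cyclic multi de Bruijn word is a linear one. -/

open Finset

section

variable {α β ι : Type*}

theorem Fin.apply_zero_eq_apply_last_of_card_filter_eq [DecidableEq β] {n : ℕ}
    (g : Fin (n + 1) → β)
    (h : ∀ y, #{i : Fin n | g i.castSucc = y} = #{i : Fin n | g i.succ = y}) :
    g 0 = g (Fin.last n) := by
  have hsplit := Fin.sum_univ_castSucc fun i => if g i = g 0 then 1 else 0
  rw [Fin.sum_univ_succ, ← card_filter, ← card_filter, h, if_pos rfl] at hsplit
  by_contra hne
  rw [if_neg (Ne.symm hne)] at hsplit
  omega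

theorem card_filter_removeNth_eq_card_mul [Fintype ι] [Fintype α] [DecidableEq α] {n m : ℕ}
    (p : Fin (n + 1)) (F : ι → Fin (n + 1) → α) (hF : ∀ w, #{i | F i = w} = m)
    (y : Fin n → α) : #{i | p.removeNth (F i) = y} = Fintype.card α * m := by
  rw [card_eq_sum_card_fiberwise (f := fun i => F i p) (t := univ) fun _ _ => mem_univ _]
  have hfiber : ∀ a, #{i ∈ {i | p.removeNth (F i) = y} | F i p = a} = m := fun a => by
    rw [filter_filter, ← hF (p.insertNth a y)]
    simp only [Fin.eq_insertNth_iff, and_comm]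
  simp [hfiber]

theorem Fin.apply_eq_apply_mod_of_apply_add_eq {L N : ℕ} (s : Fin L → α) (hN : 0 < N)
    (hNL : N ≤ L) (h : ∀ j (hj : N + j < L), s ⟨N + j, hj⟩ = s ⟨j, by omega⟩) (x : Fin L) :
    s x = s ⟨x % N, (Nat.mod_lt _ hN).trans_le hNL⟩ := by
  obtain ⟨x, hx⟩ := x
  induction x using Nat.strong_induction_on with
  | _ x ih =>
    rcases lt_or_ge x N with hlt | hge
    · simp only [Nat.mod_eq_of_lt hlt]
    · obtain ⟨j, rfl⟩ := Nat.exists_eq_add_of_le hge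
      rw [h j hx, ih j (by omega)]
      simp only [Nat.add_mod_left]

end

theorem isLinMDB.apply_add_eq {m q k : ℕ} {s : Fin (m * q ^ k + k - 1) → Fin q}
    (hs : isLinMDB m q k s) (j : ℕ) (hj : m * q ^ k + j < m * q ^ k + k - 1) :
    s ⟨m * q ^ k + j, hj⟩ = s ⟨j, by omega⟩ := by
  obtain ⟨n, rfl⟩ : ∃ n, k = n + 1 := ⟨k - 1, by omega⟩
  let G : Fin (m * q ^ (n + 1) + 1) → Fin n → Fin q := fun i l => s ⟨i + l, by omega⟩
  have hinit : ∀ i, G i.castSucc = (Fin.last n).removeNth (linWin m q (n + 1) s i) := fun i => by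
    funext l
    simp [G, linWin, Fin.removeNth]
  have htail : ∀ i, G i.succ = Fin.removeNth 0 (linWin m q (n + 1) s i) := fun i => by
    funext l
    simp only [G, linWin, Fin.removeNth, Fin.succAbove_zero, Fin.val_succ]
    congr 2
    omega
  have hG := Fin.apply_zero_eq_apply_last_of_card_filter_eq G fun y => by
    simp only [hinit, htail, card_filter_removeNth_eq_card_mul _ _ hs]
  simpa [G] using (congrFun hG ⟨j, by omega⟩).symm

theorem cycWin_restrict_eq_linWin {m q k : ℕ} (hN : 0 < m * q ^ k)
    (hNL : m * q ^ k ≤ m * q ^ k + k - 1) {s : Fin (m * q ^ k + k - 1) → Fin q}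
    (hs : isLinMDB m q k s) (i : Fin (m * q ^ k)) :
    cycWin (m * q ^ k) k q (fun i => s ⟨i, i.isLt.trans_le hNL⟩) i = linWin m q k s i :=
  funext fun j =>
    (Fin.apply_eq_apply_mod_of_apply_add_eq s hN hNL hs.apply_add_eq ⟨i + j, by omega⟩).symm

/-- For q ≥ 2, deleting the last k-1 characters is a bijection from
linear multi de Bruijn sequences to linearized cyclic multi de Bruijn sequences. -/
theorem linear_mdb_equiv_linearized_cyclic (m q k : ℕ) (hm : 1 ≤ m) (hq : 2 ≤ q) (hk : 1 ≤ k) :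
    Set.BijOn
      (fun (s : Fin (m * q ^ k + k - 1) → Fin q) (i : Fin (m * q ^ k)) =>
        s ⟨(i : ℕ), by have hi := i.isLt; omega⟩)
      {s | isLinMDB m q k s} {w | isCycMDB m q k w} := by
  have hN : 0 < m * q ^ k := Nat.mul_pos hm (Nat.pow_pos (by omega))
  have hNL : m * q ^ k ≤ m * q ^ k + k - 1 := by omega
  have hper {s} (hs : isLinMDB m q k s) :=
    Fin.apply_eq_apply_mod_of_apply_add_eq s hN hNL hs.apply_add_eq
  refine ⟨fun s hs y => ?_, fun s₁ h₁ s₂ h₂ heq => ?_, fun w hw => ?_⟩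
  · simpa only [cycWin_restrict_eq_linWin hN hNL hs] using hs y
  · funext x
    rw [hper h₁ x, hper h₂ x]
    exact congrFun heq ⟨x % _, Nat.mod_lt _ hN⟩
  · refine ⟨fun x => w ⟨x % (m * q ^ k), Nat.mod_lt _ hN⟩, fun y => hw y, ?_⟩
    exact funext fun i => congrArg w (Fin.ext (Nat.mod_eq_of_lt i.isLt))
end

section
/- A cyclic multi de Bruijn sequence with parameters (m,q,k) has rotational order d (the largest d with ρ^{ℓ/d}(s)=s, where ℓ = mq^k) only if d divides m. -/
/-- Cyclic shift of a word of length n by r positions. -/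
def cshift (n r q : ℕ) (s : Fin n → Fin q) : Fin n → Fin q :=
  fun i => s ⟨((i : ℕ) + r) % n, Nat.mod_lt _ i.pos⟩

/-- `s` (of length n) has rotational order e: e is the largest divisor d of n
such that shifting s by n/d positions leaves s fixed. -/
def hasOrder (n q : ℕ) (s : Fin n → Fin q) (e : ℕ) : Prop :=
  IsGreatest {d : ℕ | d ∣ n ∧ cshift n (n / d) q s = s} e

/-!
If the shift by `r` fixes `s` and `n = d * r`, then `s` consists of `d` copies of its first `r`
letters. Writing a position as `c + r * t` with `c < r` and `t < d`, the window starting there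
equals the window starting at `c`, so every `k`-mer occurs among the `n` windows `d` times as
often as among the first `r`. In a multi de Bruijn sequence of rotational order `d` this count
is `m`, hence `d ∣ m`.
-/

namespace CyclicWord

variable {n q k : ℕ}

lemma cshift_add (a b : ℕ) (s : Fin n → Fin q) :
    cshift n (a + b) q s = cshift n a q (cshift n b q s) := by
  funext i
  simp only [cshift, Nat.mod_add_mod]
  congr 3
  ring

lemma cshift_mul_eq_self {r : ℕ} {s : Fin n → Fin q} (h : cshift n r q s = s) (t : ℕ) :
    cshift n (r * t) q s = s := by
  induction t with
  | zero => funext i; simp [cshift, Nat.mod_eq_of_lt i.isLt]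
  | succ t ih => rw [Nat.mul_succ, cshift_add, h, ih]

lemma cycWin_cshift (a : ℕ) (s : Fin n → Fin q) (i : Fin n) :
    cycWin n k q (cshift n a q s) i = cycWin n k q s ⟨(i + a) % n, Nat.mod_lt _ i.pos⟩ := by
  funext j
  simp only [cycWin, cshift, Nat.mod_add_mod]
  congr 3
  ring

theorem dvd_card_cycWin_eq_of_cshift_eq {d r : ℕ} (hn : n = d * r) {s : Fin n → Fin q}
    (hfix : cshift n r q s = s) (y : Fin k → Fin q) :
    d ∣ (Finset.univ.filter fun i => cycWin n k q s i = y).card := by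
  subst hn
  rcases Nat.eq_zero_or_pos d with rfl | hd
  · simpa using fun x : Fin (0 * r) => absurd x.isLt (by simp)
  let ι : Fin r → Fin (d * r) := Fin.castLE (Nat.le_mul_of_pos_left r hd)
  have hwin (t : Fin d) (c : Fin r) :
      cycWin (d * r) k q s (finProdFinEquiv (t, c)) = cycWin (d * r) k q s (ι c) := by
    have hlt : (c : ℕ) + r * t < d * r := (finProdFinEquiv (t, c)).isLt
    conv_rhs => rw [← cshift_mul_eq_self hfix t, cycWin_cshift]
    congr 1
    ext
    simp [ι, finProdFinEquiv, Nat.mod_eq_of_lt hlt]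
  let T := Finset.univ.filter fun c => cycWin (d * r) k q s (ι c) = y
  have hcard : (Finset.univ ×ˢ T).card =
      (Finset.univ.filter fun i => cycWin (d * r) k q s i = y).card :=
    Finset.card_equiv finProdFinEquiv fun ⟨t, c⟩ => by simp [T, hwin]
  rw [← hcard, Finset.card_product, Finset.card_univ, Fintype.card_fin]
  exact Nat.dvd_mul_right d T.card

end CyclicWord

theorem mdb_order_dvd_multiplicity_general (m q k d : ℕ) (hq : 1 ≤ q)
    (s : Fin (m * q ^ k) → Fin q) (hs : isCycMDB m q k s)
    (hd : hasOrder (m * q ^ k) q s d) :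
    d ∣ m := by
  obtain ⟨⟨hdvd, hfix⟩, -⟩ := hd
  rw [← hs fun _ => ⟨0, hq⟩]
  exact CyclicWord.dvd_card_cycWin_eq_of_cshift_eq (Nat.mul_div_cancel' hdvd).symm hfix _

/-- A cyclic multi de Bruijn sequence with parameters (m,q,k) has
rotational order d only if d divides m. -/
theorem mdb_order_dvd_multiplicity (m q k d : ℕ) (hm : 1 ≤ m) (hq : 1 ≤ q) (hk : 1 ≤ k)
    (s : Fin (m * q ^ k) → Fin q) (hs : isCycMDB m q k s)
    (hd : hasOrder (m * q ^ k) q s d) :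
    d ∣ m :=
  mdb_order_dvd_multiplicity_general m q k d hq s hs hd
end

section
/- For m,q,k ≥ 1 and d | m, the map t ↦ t^d (concatenating d copies) is a bijection from linearized cyclic multi de Bruijn sequences with parameters (m/d, q, k) of rotational order 1 to linearized cyclic multi de Bruijn sequences with parameters (m, q, k) of rotational order d. -/
open Function Finset

theorem Nat.isGreatest_setOf_dvd_and_dvd_div {n p : ℕ} (hn : 0 < n) (hp : p ∣ n) :
    IsGreatest {d | d ∣ n ∧ p ∣ n / d} (n / p) := by
  have hp0 : 0 < p := Nat.pos_of_dvd_of_pos hp hn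
  refine ⟨⟨Nat.div_dvd_of_dvd hp, by rw [Nat.div_div_self hp hn.ne']⟩, ?_⟩
  rintro d ⟨hdn, c, hc⟩
  refine Nat.le_of_dvd (Nat.div_pos (Nat.le_of_dvd hn hp) hp0) ⟨c, ?_⟩
  rw [Nat.div_eq_iff_eq_mul_left hp0 hp, ← Nat.div_mul_cancel hdn, hc]
  ring

section Rotation

variable {n q : ℕ}

theorem cshift_one_iterate (r : ℕ) : (cshift n 1 q)^[r] = cshift n r q := by
  induction r with
  | zero => funext s i; simp [cshift, Nat.mod_eq_of_lt i.isLt]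
  | succ r ih =>
    funext s i
    rw [iterate_succ_apply', ih]
    simp only [cshift]
    congr 2
    rw [Nat.mod_add_mod, Nat.add_assoc, Nat.add_comm 1 r]

theorem isPeriodicPt_cshift_one_iff (s : Fin n → Fin q) (r : ℕ) :
    IsPeriodicPt (cshift n 1 q) r s ↔ cshift n r q s = s := by
  rw [IsPeriodicPt, IsFixedPt, cshift_one_iterate]

theorem cshift_length (s : Fin n → Fin q) : cshift n n q s = s := by
  funext i; simp [cshift, Nat.mod_eq_of_lt i.isLt]

noncomputable def rotPeriod (n q : ℕ) (s : Fin n → Fin q) : ℕ :=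
  minimalPeriod (cshift n 1 q) s

theorem cshift_eq_self_iff (s : Fin n → Fin q) (r : ℕ) :
    cshift n r q s = s ↔ rotPeriod n q s ∣ r := by
  rw [← isPeriodicPt_cshift_one_iff, isPeriodicPt_iff_minimalPeriod_dvd, rotPeriod]

theorem rotPeriod_dvd_length (s : Fin n → Fin q) : rotPeriod n q s ∣ n :=
  (cshift_eq_self_iff s n).1 (cshift_length s)

theorem rotPeriod_pos (hn : 0 < n) (s : Fin n → Fin q) : 0 < rotPeriod n q s :=
  ((isPeriodicPt_cshift_one_iff s n).2 (cshift_length s)).minimalPeriod_pos hn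

theorem hasOrder_iff (hn : 0 < n) (s : Fin n → Fin q) (e : ℕ) :
    hasOrder n q s e ↔ e = n / rotPeriod n q s := by
  have hset : {d | d ∣ n ∧ cshift n (n / d) q s = s} =
      {d | d ∣ n ∧ rotPeriod n q s ∣ n / d} := by
    simp only [cshift_eq_self_iff]
  have h := Nat.isGreatest_setOf_dvd_and_dvd_div hn (rotPeriod_dvd_length s)
  rw [hasOrder, hset]
  exact ⟨fun he => he.unique h, fun he => he ▸ h⟩

end Rotation

section Power

variable {n M q d : ℕ}

/-- For `M = d * n` this is the power `t ^ d`. -/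
def cycPower (hn : 0 < n) (t : Fin n → Fin q) : Fin M → Fin q :=
  fun i => t ⟨i % n, Nat.mod_lt _ hn⟩

theorem cycPower_injective (hn : 0 < n) (hnM : n ≤ M) :
    Injective (cycPower (M := M) (q := q) hn) := by
  intro t t' h
  funext j
  simpa [cycPower, Nat.mod_eq_of_lt j.isLt] using congrFun h ⟨j, j.isLt.trans_le hnM⟩

theorem cshift_cycPower (hn : 0 < n) (hnM : n ∣ M) (r : ℕ) (t : Fin n → Fin q) :
    cshift M r q (cycPower hn t) = cycPower hn (cshift n r q t) := by
  funext i
  simp only [cshift, cycPower, Nat.mod_mod_of_dvd _ hnM, Nat.mod_add_mod]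

theorem rotPeriod_cycPower (hn : 0 < n) (hM : 0 < M) (hnM : n ∣ M) (t : Fin n → Fin q) :
    rotPeriod M q (cycPower hn t) = rotPeriod n q t := by
  refine minimalPeriod_eq_minimalPeriod_iff.2 fun r => ?_
  rw [isPeriodicPt_cshift_one_iff, isPeriodicPt_cshift_one_iff, cshift_cycPower hn hnM,
    (cycPower_injective hn (Nat.le_of_dvd hM hnM)).eq_iff]

theorem eq_cycPower_of_cshift_eq_self (hn : 0 < n) (hnM : n ≤ M) {s : Fin M → Fin q}
    (hs : cshift M n q s = s) : s = cycPower hn (fun j => s (Fin.castLE hnM j)) := by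
  funext i
  have hper : cshift M (n * (i / n)) q s = s := by
    rw [← isPeriodicPt_cshift_one_iff] at hs ⊢
    exact hs.mul_const _
  calc s i = cshift M (n * (i / n)) q s ⟨i % n, (Nat.mod_lt _ hn).trans_le hnM⟩ := by
        simp only [cshift, Nat.mod_add_div, Nat.mod_eq_of_lt i.isLt]
    _ = s (Fin.castLE hnM ⟨i % n, Nat.mod_lt _ hn⟩) := by rw [hper]; rfl

theorem cycWin_cycPower (hn : 0 < n) (hnM : n ∣ M) (k : ℕ) (t : Fin n → Fin q) (i : Fin M) :
    cycWin M k q (cycPower hn t) i = cycWin n k q t ⟨i % n, Nat.mod_lt _ hn⟩ := by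
  funext j
  simp only [cycWin, cycPower, Nat.mod_mod_of_dvd _ hnM, Nat.mod_add_mod]

theorem card_filter_mod_eq (hn : 0 < n) (p : Fin n → Prop) [DecidablePred p] :
    #{i : Fin (d * n) | p ⟨i % n, Nat.mod_lt _ hn⟩} = d * #{j | p j} := by
  calc _ = #((univ : Finset (Fin d)) ×ˢ ({j | p j} : Finset (Fin n))) :=
        card_equiv finProdFinEquiv.symm fun i => by simp [Fin.modNat]
    _ = d * #{j | p j} := by rw [card_product, card_univ, Fintype.card_fin]

theorem card_filter_cycWin_cycPower (hn : 0 < n) (hM : M = d * n) (k : ℕ) (t : Fin n → Fin q)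
    (y : Fin k → Fin q) :
    #{i : Fin M | cycWin M k q (cycPower hn t) i = y} = d * #{j | cycWin n k q t j = y} := by
  subst hM
  simp_rw [cycWin_cycPower hn (dvd_mul_left n d)]
  exact card_filter_mod_eq hn (fun j => cycWin n k q t j = y)

theorem isCycMDB_cycPower_iff {m k : ℕ} (hd : 0 < d) (hdm : d ∣ m) (hn : 0 < m / d * q ^ k)
    (t : Fin (m / d * q ^ k) → Fin q) :
    isCycMDB m q k (cycPower hn t) ↔ isCycMDB (m / d) q k t := by
  have hM : m * q ^ k = d * (m / d * q ^ k) := by rw [← mul_assoc, Nat.mul_div_cancel' hdm]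
  refine forall_congr' fun y => ?_
  rw [card_filter_cycWin_cycPower hn hM, eq_comm (b := m / d), Nat.div_eq_iff_eq_mul_left hd hdm,
    mul_comm, eq_comm]

theorem hasOrder_cycPower_iff (hd : 0 < d) (hn : 0 < n) (hM : M = d * n) (t : Fin n → Fin q) :
    hasOrder M q (cycPower hn t) d ↔ hasOrder n q t 1 := by
  subst hM
  rw [hasOrder_iff (by positivity), hasOrder_iff hn, rotPeriod_cycPower hn (by positivity)
    (dvd_mul_left n d), Nat.mul_div_assoc _ (rotPeriod_dvd_length t), eq_comm, eq_comm (a := 1),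
    mul_eq_left₀ hd.ne']

theorem exists_eq_cycPower_of_hasOrder (hd : 0 < d) (hn : 0 < n) (hM : M = d * n)
    {s : Fin M → Fin q} (hs : hasOrder M q s d) : ∃ t, s = cycPower hn t := by
  subst hM
  have hM0 : 0 < d * n := by positivity
  have hp := rotPeriod_dvd_length s
  rw [hasOrder_iff hM0, eq_comm, Nat.div_eq_iff_eq_mul_left (rotPeriod_pos hM0 s) hp] at hs
  have hpn : rotPeriod (d * n) q s = n := (Nat.eq_of_mul_eq_mul_left hd hs).symm
  have hn_period : cshift (d * n) n q s = s := (cshift_eq_self_iff s n).2 hpn.dvd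
  exact ⟨_, eq_cycPower_of_cshift_eq_self hn (Nat.le_mul_of_pos_left n hd) hn_period⟩

end Power

/-- For m,q,k ≥ 1 and d | m, the map t ↦ t^d (concatenating d copies)
is a bijection from linearized cyclic multi de Bruijn sequences with parameters
(m/d, q, k) of rotational order 1 to those with parameters (m, q, k) of order d. -/
theorem power_map_bijection (m q k d : ℕ) (hm : 1 ≤ m) (hq : 1 ≤ q)
    (hd : d ∣ m) :
    Set.BijOn
      (fun (t : Fin ((m / d) * q ^ k) → Fin q) (i : Fin (m * q ^ k)) =>
        t ⟨(i : ℕ) % ((m / d) * q ^ k), Nat.mod_lt _ (by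
          have hd0 : 0 < d := Nat.pos_of_dvd_of_pos hd hm
          exact Nat.mul_pos (Nat.div_pos (Nat.le_of_dvd hm hd) hd0)
            (pow_pos (by omega) k))⟩)
      {t | isCycMDB (m / d) q k t ∧ hasOrder ((m / d) * q ^ k) q t 1}
      {s | isCycMDB m q k s ∧ hasOrder (m * q ^ k) q s d} := by
  have hd0 : 0 < d := Nat.pos_of_dvd_of_pos hd hm
  have hn : 0 < m / d * q ^ k := Nat.mul_pos (Nat.div_pos (Nat.le_of_dvd hm hd) hd0) (pow_pos hq k)
  have hM : m * q ^ k = d * (m / d * q ^ k) := by rw [← mul_assoc, Nat.mul_div_cancel' hd]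
  change Set.BijOn (cycPower hn) _ _
  refine ⟨fun t ⟨hmdb, hord⟩ => ⟨(isCycMDB_cycPower_iff hd0 hd hn t).2 hmdb,
      (hasOrder_cycPower_iff hd0 hn hM t).2 hord⟩,
    (cycPower_injective hn (hM ▸ Nat.le_mul_of_pos_left _ hd0)).injOn, ?_⟩
  rintro s ⟨hmdb, hord⟩
  obtain ⟨t, rfl⟩ := exists_eq_cycPower_of_hasOrder hd0 hn hM hord
  exact ⟨t, ⟨(isCycMDB_cycPower_iff hd0 hd hn t).1 hmdb,
    (hasOrder_cycPower_iff hd0 hn hM t).1 hord⟩, rfl⟩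
end

section
/- For a finite balanced directed multigraph H with all edges distinguishable, the set of cycle partitions of H (sets of edge-disjoint directed cycles covering every edge exactly once) is in bijection with the set of edge successor maps of H, i.e., functions f: E(H) → E(H) with Head(e) = Tail(f(e)) for all e that restrict to a bijection In(x) → Out(x) at every vertex x. -/
/-- `P` is a cycle partition of the directed multigraph with edge set `E`
(edge endpoints given by `Tail`, `Head`): a set of directed cycles
(cycles taken up to rotation, i.e. elements of `Cycle E`) using each edge of
the graph exactly once. -/
def IsCyclePartition {V E : Type*} (Tail Head : E → V) (P : Set (Cycle E)) : Prop :=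
  (∀ c ∈ P, c ≠ Cycle.nil ∧ c.Nodup ∧
    Cycle.Chain (fun e e' => Head e = Tail e') c) ∧
  ∀ e : E, ∃! c : Cycle E, c ∈ P ∧ e ∈ c

/-- `f` is an edge successor map: Head(e) = Tail(f(e)) for every edge e, and at
every vertex x, f restricts to a bijection In(x) → Out(x). -/
def IsEdgeSuccessor {V E : Type*} (Tail Head : E → V) (f : E → E) : Prop :=
  (∀ e : E, Head e = Tail (f e)) ∧
  ∀ x : V, Set.BijOn f {e | Head e = x} {e | Tail e = x}

/-!
A cycle partition `P` determines a successor map, sending each edge to the next edge on the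
cycle of `P` through it; every edge is then a periodic point whose periodic orbit is its cycle.
Conversely, if every point of `f : E → E` is periodic, the periodic orbits of `f` partition `E`
into cycles, which are cycles of the graph exactly when `Head e = Tail (f e)` for all `e`.
Finally, the bijections `In(x) → Out(x)` glue to a bijection of `E`, and on a finite set a map
is injective iff all its points are periodic.
-/

open Function Set

theorem Cycle.chain_iff_forall_next {α : Type*} [DecidableEq α] {r : α → α → Prop}
    {s : Cycle α} (hs : s.Nodup) : s.Chain r ↔ ∀ a (ha : a ∈ s), r a (s.next hs a ha) := by
  induction s using Cycle.induction_on with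
  | nil => simp
  | cons a l _ =>
    -- `next` shifts `a :: l` to `l ++ [a]`, the list of right-hand sides in the chain
    have hnext := List.pmap_next_eq_rotate_one (a :: l) hs
    rw [List.rotate_cons_succ, List.rotate_zero] at hnext
    rw [Cycle.chain_coe_cons, List.isChain_iff_forall₂, List.dropLast_cons_of_ne_nil (by simp),
      List.dropLast_concat, List.tail_cons, ← hnext, List.pmap_eq_map_attach]
    conv_lhs => arg 2; rw [← List.attach_map_subtype_val (a :: l)]
    rw [List.forall₂_map_left_iff, List.forall₂_map_right_iff, List.forall₂_same]
    exact ⟨fun h b hb => h ⟨b, hb⟩ (List.mem_attach _ _), fun h b _ => h b.1 b.2⟩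

theorem Cycle.exists_eq_coe_cons_of_mem {α : Type*} {s : Cycle α} {x : α} (hx : x ∈ s) :
    ∃ l : List α, s = ↑(x :: l) := by
  induction s using Cycle.induction_on with
  | nil => simp at hx
  | cons a l _ =>
    obtain ⟨t, u, htu⟩ := List.append_of_mem (Cycle.mem_coe_iff.mp hx)
    exact ⟨u ++ t, by rw [htu]; exact Cycle.coe_eq_coe.mpr List.isRotated_append⟩

namespace Function

variable {α : Type*} {f : α → α} {x y : α}

theorem periodicOrbit_chain_iff_forall_mem (r : α → α → Prop) :
    (periodicOrbit f x).Chain r ↔ ∀ y ∈ periodicOrbit f x, r y (f y) := by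
  by_cases hx : x ∈ periodicPts f
  · simp only [periodicOrbit_chain' r hx, mem_periodicOrbit_iff hx, forall_exists_index,
      forall_apply_eq_imp_iff, iterate_succ_apply']
  · simp [periodicOrbit_eq_nil_of_not_periodic_pt hx]

theorem periodicOrbit_eq_of_mem (hy : y ∈ periodicOrbit f x) :
    periodicOrbit f y = periodicOrbit f x := by
  by_cases hx : x ∈ periodicPts f
  · obtain ⟨n, rfl⟩ := (mem_periodicOrbit_iff hx).mp hy
    exact periodicOrbit_apply_iterate_eq hx n
  · simp [periodicOrbit_eq_nil_of_not_periodic_pt hx] at hy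

theorem periodicOrbit_eq_of_chain {c : Cycle α} (hc : c.Nodup)
    (hf : c.Chain (fun a b => f a = b)) (hx : x ∈ c) : periodicOrbit f x = c := by
  obtain ⟨l, rfl⟩ := Cycle.exists_eq_coe_cons_of_mem hx
  rw [Cycle.chain_coe_cons, ← List.cons_append] at hf
  have hl : (x :: l).Nodup := hc
  have hiter : ∀ i (hi : i < l.length + 1), f^[i] x = (x :: l)[i] := fun i hi => by
    have := hf.iterate_eq_of_apply_eq i (by simp; omega)
    rwa [List.getElem_append_left (show i < (x :: l).length from hi)] at this
  have hper : IsPeriodicPt f (l.length + 1) x := by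
    simpa [IsPeriodicPt, IsFixedPt] using hf.iterate_eq_of_apply_eq (l.length + 1) (by simp)
  have hmin : minimalPeriod f x = l.length + 1 := by
    refine le_antisymm (hper.minimalPeriod_le l.length.succ_pos) (not_lt.mp fun hlt => ?_)
    have hpos := hper.minimalPeriod_pos l.length.succ_pos
    have hback : (x :: l)[minimalPeriod f x] = (x :: l)[0] := by
      rw [← hiter _ hlt, iterate_minimalPeriod]; rfl
    exact hpos.ne' (hl.getElem_inj_iff.mp hback)
  rw [periodicOrbit_def, List.range_map_iterate, hmin]
  congr 1
  exact List.ext_getElem (by simp) fun i hi _ => by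
    rw [List.getElem_iterate]; exact hiter i (by simpa using hi)

end Function

section CyclePartition

variable {V E : Type*} {Tail Head : E → V}

namespace IsCyclePartition

variable {P : Set (Cycle E)} (hP : IsCyclePartition Tail Head P)

noncomputable def cycleOf (e : E) : Cycle E := (hP.2 e).exists.choose

theorem cycleOf_mem (e : E) : hP.cycleOf e ∈ P := (hP.2 e).exists.choose_spec.1

theorem mem_cycleOf (e : E) : e ∈ hP.cycleOf e := (hP.2 e).exists.choose_spec.2

theorem cycleOf_eq {c : Cycle E} (hc : c ∈ P) {e : E} (he : e ∈ c) : hP.cycleOf e = c :=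
  (hP.2 e).unique ⟨hP.cycleOf_mem e, hP.mem_cycleOf e⟩ ⟨hc, he⟩

variable [DecidableEq E]

noncomputable def next (e : E) : E :=
  (hP.cycleOf e).next (hP.1 _ (hP.cycleOf_mem e)).2.1 e (hP.mem_cycleOf e)

theorem next_eq {c : Cycle E} (hc : c ∈ P) {e : E} (he : e ∈ c) :
    hP.next e = c.next (hP.1 c hc).2.1 e he := by
  have hcongr : ∀ {c'} (_ : c' = c) hc' he',
      c'.next hc' e he' = c.next (hP.1 c hc).2.1 e he := by
    rintro _ rfl _ _; rfl
  exact hcongr (hP.cycleOf_eq hc he) _ _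

theorem chain_next {c : Cycle E} (hc : c ∈ P) : c.Chain (fun a b => hP.next a = b) :=
  (Cycle.chain_iff_forall_next (hP.1 c hc).2.1).mpr fun _ he => hP.next_eq hc he

theorem periodicOrbit_next {c : Cycle E} (hc : c ∈ P) {e : E} (he : e ∈ c) :
    periodicOrbit hP.next e = c :=
  periodicOrbit_eq_of_chain (hP.1 c hc).2.1 (hP.chain_next hc) he

theorem head_eq_tail_next (e : E) : Head e = Tail (hP.next e) :=
  (Cycle.chain_iff_forall_next _).mp (hP.1 _ (hP.cycleOf_mem e)).2.2 e (hP.mem_cycleOf e)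

theorem periodicPts_next : periodicPts hP.next = univ := by
  refine eq_univ_of_forall fun e => ?_
  rw [← periodicOrbit_eq_nil_iff_not_periodic_pt.not_left,
    hP.periodicOrbit_next (hP.cycleOf_mem e) (hP.mem_cycleOf e)]
  exact (hP.1 _ (hP.cycleOf_mem e)).1

theorem range_periodicOrbit_next : range (periodicOrbit hP.next) = P := by
  ext c
  constructor
  · rintro ⟨e, rfl⟩
    rw [hP.periodicOrbit_next (hP.cycleOf_mem e) (hP.mem_cycleOf e)]
    exact hP.cycleOf_mem e
  · intro hc
    induction c using Cycle.induction_on with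
    | nil => exact absurd rfl (hP.1 _ hc).1
    | cons e l _ => exact ⟨e, hP.periodicOrbit_next hc (by simp)⟩

end IsCyclePartition

theorem isCyclePartition_range_periodicOrbit {f : E → E} (hf : ∀ e, Head e = Tail (f e))
    (hper : periodicPts f = univ) : IsCyclePartition Tail Head (range (periodicOrbit f)) := by
  refine ⟨?_, fun e => ⟨periodicOrbit f e, ⟨mem_range_self e, ?_⟩, ?_⟩⟩
  · rintro _ ⟨e, rfl⟩
    refine ⟨?_, nodup_periodicOrbit, (periodicOrbit_chain_iff_forall_mem _).mpr fun e _ => hf e⟩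
    exact periodicOrbit_eq_nil_iff_not_periodic_pt.not_left.mpr (hper ▸ mem_univ e)
  · exact self_mem_periodicOrbit (hper ▸ mem_univ e)
  · rintro _ ⟨⟨x, rfl⟩, he⟩
    exact (periodicOrbit_eq_of_mem he).symm

theorem IsCyclePartition.next_range_periodicOrbit [DecidableEq E] {f : E → E}
    (hper : periodicPts f = univ) (hP : IsCyclePartition Tail Head (range (periodicOrbit f))) :
    hP.next = f := by
  funext e
  have he := self_mem_periodicOrbit (hper ▸ mem_univ e : e ∈ periodicPts f)
  have hchain : (periodicOrbit f e).Chain (fun a b => f a = b) :=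
    (periodicOrbit_chain_iff_forall_mem _).mpr fun _ _ => rfl
  rw [hP.next_eq (mem_range_self e) he]
  exact ((Cycle.chain_iff_forall_next nodup_periodicOrbit).mp hchain e he).symm

variable (Tail Head)

noncomputable def cyclePartitionEquiv [DecidableEq E] :
    {P // IsCyclePartition Tail Head P} ≃
      {f : E → E // (∀ e, Head e = Tail (f e)) ∧ periodicPts f = univ} where
  toFun P := ⟨P.2.next, P.2.head_eq_tail_next, P.2.periodicPts_next⟩
  invFun f := ⟨range (periodicOrbit f.1), isCyclePartition_range_periodicOrbit f.2.1 f.2.2⟩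
  left_inv P := Subtype.ext P.2.range_periodicOrbit_next
  right_inv f := Subtype.ext (IsCyclePartition.next_range_periodicOrbit f.2.2 _)

theorem isEdgeSuccessor_iff_bijective (f : E → E) :
    IsEdgeSuccessor Tail Head f ↔ (∀ e, Head e = Tail (f e)) ∧ Bijective f := by
  constructor
  · rintro ⟨hf, hbij⟩
    refine ⟨hf, fun a b hab => ?_, fun e => ?_⟩
    · exact (hbij (Head a)).injOn rfl (show Head b = Head a by rw [hf a, hf b, hab]) hab
    · obtain ⟨e', -, rfl⟩ := (hbij (Tail e)).surjOn (show Tail e = Tail e from rfl)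
      exact ⟨e', rfl⟩
  · rintro ⟨hf, hbij⟩
    refine ⟨hf, fun x => ?_⟩
    refine ⟨fun e (he : Head e = x) => he ▸ (hf e).symm, hbij.1.injOn,
      fun e (he : Tail e = x) => ?_⟩
    obtain ⟨e', rfl⟩ := hbij.2 e
    exact ⟨e', (hf e').trans he, rfl⟩

theorem isEdgeSuccessor_iff_periodicPts_eq_univ [Finite E] (f : E → E) :
    IsEdgeSuccessor Tail Head f ↔ (∀ e, Head e = Tail (f e)) ∧ periodicPts f = univ := by
  rw [isEdgeSuccessor_iff_bijective, ← Finite.injective_iff_bijective,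
    injective_iff_periodicPts_eq_univ]

end CyclePartition

theorem cycle_partitions_equiv_edge_successors_general {V E : Type*} [Fintype E]
    (Tail Head : E → V) :
    Nonempty ({P : Set (Cycle E) // IsCyclePartition Tail Head P} ≃
      {f : E → E // IsEdgeSuccessor Tail Head f}) := by
  classical
  exact ⟨(cyclePartitionEquiv Tail Head).trans
    (Equiv.subtypeEquivRight fun f => (isEdgeSuccessor_iff_periodicPts_eq_univ Tail Head f).symm)⟩

/-- For a finite balanced directed multigraph H, the set of cycle
partitions of H is in bijection with the set of edge successor maps of H. -/
theorem cycle_partitions_equiv_edge_successors {V E : Type*} [Fintype V] [Fintype E]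
    (Tail Head : E → V)
    (hbal : ∀ x : V, Nat.card {e : E // Head e = x} = Nat.card {e : E // Tail e = x}) :
    Nonempty ({P : Set (Cycle E) // IsCyclePartition Tail Head P} ≃
      {f : E → E // IsEdgeSuccessor Tail Head f}) :=
  cycle_partitions_equiv_edge_successors_general Tail Head
end

section
/- Let s = t^d where t is a primitive word of length r and d ≥ 1, and let BWT(t) = a₁a₂⋯a_r be the last column of the sorted table of the r rotations of t. Then BWT(s), the last column of the lexicographically sorted table of all rd rotations of s, equals a₁^d a₂^d ⋯ a_r^d. -/
/-- A word is primitive (the cycle it represents is aperiodic) if it is nonempty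
and all of its rotations are distinct. -/
def Primitive {α : Type*} (l : List α) : Prop :=
  l ≠ [] ∧ ∀ n : ℕ, 0 < n → n < l.length → l.rotate n ≠ l

/-- The Burrows–Wheeler transform of a word u: list all |u| cyclic rotations of
u, sort them lexicographically, and read the last column top to bottom. -/
def bwt {α : Type*} [LinearOrder α] [Inhabited α] (u : List α) : List α :=
  (((List.range u.length).map (fun i => u.rotate i)).mergeSort
      (fun a b => decide (a ≤ b))).map (fun l => l.getLastD default)

/-! The rotations of `t^d` are the `d`-th powers of the rotations of `t`, each occurring `d` times,
because rotating `t^d` is periodic with period `|t|`. Raising words of equal length to the `d`-th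
power preserves their lexicographic order, so the sorted table of `t^d` is the sorted table of `t`
with every row replaced by `d` copies of its `d`-th power, and a power ends in the same letter as
its base. -/

open List

namespace List

variable {α β : Type*}

theorem flatten_replicate_succ_append (u v : List α) (k : ℕ) :
    (replicate (k + 1) (u ++ v)).flatten = u ++ (replicate k (v ++ u)).flatten ++ v := by
  induction k with
  | zero => simp
  | succ k ih =>
    rw [replicate_succ, flatten_cons, ih]
    simp only [replicate_succ, flatten_cons, append_assoc]

theorem rotate_one_flatten_replicate (w : List α) (d : ℕ) :
    (replicate d w).flatten.rotate 1 = (replicate d (w.rotate 1)).flatten := by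
  rcases w with _ | ⟨a, u⟩
  · simp
  rcases d with _ | k
  · simp
  rw [rotate_cons_succ, rotate_zero, flatten_replicate_succ_append, replicate_succ, flatten_cons,
    cons_append, rotate_cons_succ, rotate_zero, singleton_append]

theorem rotate_flatten_replicate (w : List α) (d i : ℕ) :
    (replicate d w).flatten.rotate i = (replicate d (w.rotate i)).flatten := by
  induction i with
  | zero => simp
  | succ i ih => rw [← rotate_rotate, ih, rotate_one_flatten_replicate, rotate_rotate]

theorem getLastD_flatten_replicate {d : ℕ} (hd : d ≠ 0) (w : List α) (x : α) :
    (replicate d w).flatten.getLastD x = w.getLastD x := by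
  rw [getLastD_eq_getLast?, getLastD_eq_getLast?, getLast?_flatten_replicate hd]

theorem flatten_replicate_perm_flatten_map_replicate (d : ℕ) (L : List α) :
    (replicate d L).flatten ~ (L.map (replicate d)).flatten := by
  classical
  refine perm_iff_count.2 fun a => ?_
  simp only [count_flatten, map_replicate, sum_replicate, smul_eq_mul, map_map, Function.comp_def,
    count_replicate]
  rw [sum_map_ite]
  simp only [map_const', sum_replicate, smul_eq_mul, mul_zero, add_zero, Bool.decide_eq_true,
    ← countP_eq_length_filter, ← count_eq_countP]
  exact mul_comm _ _

theorem map_range_mul_of_periodic {f : ℕ → β} {r : ℕ} (hf : Function.Periodic f r) (d : ℕ) :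
    (range (r * d)).map f = (replicate d ((range r).map f)).flatten := by
  induction d with
  | zero => simp
  | succ d ih =>
    rw [Nat.mul_succ, range_add, map_append, ih, map_map, replicate_succ', flatten_append,
      flatten_singleton]
    congr 1
    refine map_congr_left fun j _ => ?_
    simpa [add_comm, mul_comm] using hf.nat_mul d j

theorem SortedLE.flatten_map_replicate [Preorder α] {L : List α} (hL : L.SortedLE) (d : ℕ) :
    (L.map (replicate d)).flatten.SortedLE := by
  refine Pairwise.sortedLE (pairwise_flatten.2 ⟨?_, ?_⟩)
  · simp only [mem_map, forall_exists_index, and_imp, forall_apply_eq_imp_iff₂]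
    exact fun x _ => (sortedLE_replicate d).pairwise
  · refine pairwise_map.2 (hL.pairwise.imp fun hxy x hx y hy => ?_)
    rw [eq_of_mem_replicate hx, eq_of_mem_replicate hy]
    exact hxy

theorem mergeSort_eq_of_perm_of_sortedLE [LinearOrder α] {l l' : List α} (hp : l ~ l')
    (hl' : l'.SortedLE) : l.mergeSort (· ≤ ·) = l' :=
  ((mergeSort_perm l _).trans hp).eq_of_sortedLE sortedLE_mergeSort hl'

section Lex

variable [LinearOrder α]

theorem append_lt_append_of_lt_of_length_eq {u v : List α} (h : u < v)
    (hlen : u.length = v.length) (w w' : List α) : u ++ w < v ++ w' := by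
  change Lex (· < ·) u v at h
  change Lex (· < ·) (u ++ w) (v ++ w')
  induction h with
  | nil => simp at hlen
  | cons _ ih => exact Lex.cons (ih (by simpa using hlen))
  | rel h => exact Lex.rel h

theorem flatten_replicate_le_flatten_replicate {u v : List α} (h : u ≤ v)
    (hlen : u.length = v.length) (d : ℕ) :
    (replicate d u).flatten ≤ (replicate d v).flatten := by
  rcases d with _ | d
  · simp
  rcases h.eq_or_lt with rfl | hlt
  · exact le_rfl
  simp only [replicate_succ, flatten_cons]
  exact (append_lt_append_of_lt_of_length_eq hlt hlen _ _).le

end Lex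

end List

section Rotations

variable {α : Type*}

def rotations (u : List α) : List (List α) :=
  (range u.length).map u.rotate

theorem length_of_mem_rotations {u w : List α} (hw : w ∈ rotations u) : w.length = u.length := by
  obtain ⟨i, -, rfl⟩ := mem_map.1 hw
  exact length_rotate ..

theorem rotations_flatten_replicate (t : List α) (d : ℕ) :
    rotations (replicate d t).flatten
      = (replicate d ((rotations t).map fun w => (replicate d w).flatten)).flatten := by
  have hperiodic : Function.Periodic (fun i => (replicate d (t.rotate i)).flatten) t.length :=
    fun i => by dsimp only; rw [← rotate_mod t (i + _), Nat.add_mod_right, rotate_mod]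
  have hlen : (replicate d t).flatten.length = t.length * d := by
    simp [length_flatten, mul_comm]
  rw [rotations, rotations, hlen, map_map, funext (rotate_flatten_replicate t d)]
  exact map_range_mul_of_periodic hperiodic d

variable [LinearOrder α]

theorem bwt_eq_map_mergeSort_rotations [Inhabited α] (u : List α) :
    bwt u = ((rotations u).mergeSort (· ≤ ·)).map (getLastD · default) :=
  rfl

theorem mergeSort_rotations_flatten_replicate (t : List α) (d : ℕ) :
    (rotations (replicate d t).flatten).mergeSort (· ≤ ·)
      = ((((rotations t).mergeSort (· ≤ ·)).map fun w => (replicate d w).flatten).map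
          (replicate d)).flatten := by
  set M := (rotations t).mergeSort (· ≤ ·)
  have hlen : ∀ w ∈ M, w.length = t.length := fun w hw =>
    length_of_mem_rotations (mem_mergeSort.1 hw)
  have hsorted : (M.map fun w => (replicate d w).flatten).SortedLE :=
    Pairwise.sortedLE <| pairwise_map.2 <| (Pairwise.and_mem.1 sortedLE_mergeSort.pairwise).imp
      fun ⟨hu, hv, huv⟩ =>
        flatten_replicate_le_flatten_replicate huv (by rw [hlen _ hu, hlen _ hv]) d
  refine mergeSort_eq_of_perm_of_sortedLE ?_ (hsorted.flatten_map_replicate d)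
  rw [rotations_flatten_replicate]
  exact (flatten_replicate_perm_flatten_map_replicate d _).trans
    (((mergeSort_perm _ _).symm.map _).map _).flatten

end Rotations

theorem bwt_power_general (α : Type*) [LinearOrder α] [Inhabited α]
    (t : List α) (d : ℕ) :
    bwt ((List.replicate d t).flatten)
      = ((bwt t).map (fun a => List.replicate d a)).flatten := by
  rw [bwt_eq_map_mergeSort_rotations, bwt_eq_map_mergeSort_rotations,
    mergeSort_rotations_flatten_replicate, map_flatten, map_map, map_map, map_map]
  congr 1
  refine map_congr_left fun w _ => ?_
  rcases Nat.eq_zero_or_pos d with rfl | hd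
  · rfl
  simp only [Function.comp_apply, map_replicate, getLastD_flatten_replicate hd.ne']

/-- If s = t^d with t primitive of length r, d ≥ 1, and
BWT(t) = a₁a₂⋯a_r, then BWT(s) = a₁^d a₂^d ⋯ a_r^d. -/
theorem bwt_power (α : Type*) [LinearOrder α] [Inhabited α]
    (t : List α) (ht : Primitive t) (d : ℕ) (hd : 1 ≤ d) :
    bwt ((List.replicate d t).flatten)
      = ((bwt t).map (fun a => List.replicate d a)).flatten :=
  bwt_power_general α t d
end
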